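/- Let K ⊆ L be a field extension of infinite degree. Then there exists a sequence (a_n) ∈ L^ℕ that does not lie in the L-span of K^ℕ; concretely, if (b_n) is a sequence of elements of L that are linearly independent over K, then (b_n) ∉ span_L(K^ℕ). -/

import Mathlib

/-!
If `b ∈ span_L(K^ℕ)`, then `b = ∑ aᵢ • gᵢ` for finitely many `aᵢ ∈ L` and `K`-valued `gᵢ`, so every
term `b n = ∑ gᵢ(n) • aᵢ` lies in the `K`-span of the finitely many `aᵢ`. A family that is linearly
independent over `K` and lies in a finitely spanned `K`-module is finite, so an infinite one such as
`(b n)` cannot lie in `span_L(K^ℕ)`. When `[L : K] = ∞`, a basis of `L` over `K` supplies such a family.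
-/

open Submodule

theorem exists_finite_range_subset_span_of_mem_span_algebraMap {K L ι : Type*} [CommSemiring K]
    [CommSemiring L] [Algebra K L] {v : ι → L}
    (hv : v ∈ span L {w : ι → L | ∀ n, ∃ c : K, w n = algebraMap K L c}) :
    ∃ s : Set L, s.Finite ∧ Set.range v ⊆ span K s := by
  obtain ⟨n, a, g, rfl⟩ := mem_span_set'.mp hv
  refine ⟨Set.range a, Set.finite_range a, ?_⟩
  rintro _ ⟨m, rfl⟩
  simp only [Finset.sum_apply, Pi.smul_apply, smul_eq_mul]
  refine sum_mem fun i _ => ?_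
  obtain ⟨c, hc⟩ := (g i).2 m
  rw [hc, mul_comm, ← Algebra.smul_def]
  exact smul_mem _ c (subset_span ⟨i, rfl⟩)

theorem LinearIndependent.notMem_span_algebraMap {K L ι : Type*} [CommRing K]
    [StrongRankCondition K] [CommRing L] [Algebra K L] [Infinite ι] {b : ι → L}
    (hb : LinearIndependent K b) :
    b ∉ span L {w : ι → L | ∀ n, ∃ c : K, w n = algebraMap K L c} := fun hmem => by
  obtain ⟨s, hs, hbs⟩ := exists_finite_range_subset_span_of_mem_span_algebraMap hmem
  have := hs.to_subtype
  have := hb.finite_of_le_span_finite b s hbs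
  exact not_finite ι

theorem Module.exists_linearIndependent_nat_of_not_finite {K V : Type*} [Semiring K]
    [AddCommMonoid V] [Module K V] [Module.Free K V] (h : ¬ Module.Finite K V) :
    ∃ b : ℕ → V, LinearIndependent K b := by
  let B := Module.Free.chooseBasis K V
  have : Infinite (Module.Free.ChooseBasisIndex K V) :=
    not_finite_iff_infinite.mp fun _ => h (Module.Finite.of_basis B)
  let e := Infinite.natEmbedding (Module.Free.ChooseBasisIndex K V)
  exact ⟨B ∘ e, B.linearIndependent.comp e e.injective⟩

/-- If `K ⊆ L` has infinite degree, then there is a sequence in `L^ℕ` not lying in the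
`L`-span of `K^ℕ`; concretely, any sequence of elements of `L` that is linearly
independent over `K` does not lie in this span. -/
theorem stmt3 (K L : Type) [Field K] [Field L] [Algebra K L]
    (h : ¬ FiniteDimensional K L) :
    (∃ a : ℕ → L,
        a ∉ Submodule.span L {v : ℕ → L | ∀ n, ∃ c : K, v n = algebraMap K L c}) ∧
    ∀ b : ℕ → L, LinearIndependent K b →
      b ∉ Submodule.span L {v : ℕ → L | ∀ n, ∃ c : K, v n = algebraMap K L c} := by
  obtain ⟨b, hb⟩ := Module.exists_linearIndependent_nat_of_not_finite h
  exact ⟨⟨b, hb.notMem_span_algebraMap⟩, fun _ hb' => hb'.notMem_span_algebraMap⟩
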